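/- arXiv:2001.01189 — 2 statements merged into one kernel-verified Lean document; each statement's English description precedes it below -/
import Mathlib

section
/- The prescribed bracket on g(γ,Q) is well defined: the bilinear extension of the bracket [L_m,L_n]=σ(m,n)(γ|n−m)L_{m+n} for m,n∈R, [L_m,L_s]=σ(m,s)(γ|s)L_{m+s} for m∈R, s∈ℤ^d∖R, and [L_r,L_s]=(σ(r,s)−σ(s,r))L_{r+s} for r,s∈ℤ^d∖R is antisymmetric and satisfies the Jacobi identity, so it makes g(γ,Q) a complex Lie algebra. -/
open scoped BigOperators

namespace QTorus

/-- σ(m,n) = ∏_{i<j} q_{ji}^{m_j n_i}. -/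
noncomputable def qsigma (d : ℕ) (Q : Matrix (Fin d) (Fin d) ℂ) (m n : Fin d → ℤ) : ℂ :=
  ∏ i : Fin d, ∏ j : Fin d, if i < j then Q j i ^ (m j * n i) else 1

/-- The radical subgroup R = {m | σ(m,n)=σ(n,m) for all n}. -/
def Rset (d : ℕ) (Q : Matrix (Fin d) (Fin d) ℂ) : Set (Fin d → ℤ) :=
  {m | ∀ n : Fin d → ℤ, qsigma d Q m n = qsigma d Q n m}

/-- (γ|m) = ∑ γ_i m_i. -/
noncomputable def ip (d : ℕ) (γ : Fin d → ℂ) (m : Fin d → ℤ) : ℂ :=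
  ∑ i : Fin d, γ i * (m i : ℂ)

/-- The underlying vector space of g(γ,Q): formal ℂ-linear combinations of basis
vectors indexed by ℤ^d. -/
abbrev g (d : ℕ) := (Fin d → ℤ) →₀ ℂ

/-- The basis vector L_m. -/
noncomputable def L (d : ℕ) (m : Fin d → ℤ) : g d := Finsupp.single m 1

/-- Hypotheses on the matrix Q: nonzero entries, q_{ii}=1, q_{ij}q_{ji}=1. -/
def QOk (d : ℕ) (Q : Matrix (Fin d) (Fin d) ℂ) : Prop :=
  (∀ i, Q i i = 1) ∧ (∀ i j, Q i j * Q j i = 1) ∧ (∀ i j, Q i j ≠ 0)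

/-- γ is generic: γ_1,…,γ_d are linearly independent over ℚ. -/
def Generic (d : ℕ) (γ : Fin d → ℂ) : Prop := LinearIndependent ℚ γ

open Classical in
/-- Structure constants of g(γ,Q): [L_m, L_n] = sc(m,n) • L_{m+n}. -/
noncomputable def sc (d : ℕ) (Q : Matrix (Fin d) (Fin d) ℂ) (γ : Fin d → ℂ)
    (m n : Fin d → ℤ) : ℂ :=
  if m ∈ Rset d Q then
    (if n ∈ Rset d Q then qsigma d Q m n * ip d γ (n - m)
     else qsigma d Q m n * ip d γ n)
  else
    (if n ∈ Rset d Q then -(qsigma d Q n m * ip d γ m)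
     else qsigma d Q m n - qsigma d Q n m)

/-- The bracket of g(γ,Q), as the bilinear extension of
[L_m, L_n] = sc(m,n) • L_{m+n}. -/
noncomputable def br (d : ℕ) (Q : Matrix (Fin d) (Fin d) ℂ) (γ : Fin d → ℂ)
    (x y : g d) : g d :=
  x.sum fun m a => y.sum fun n b => Finsupp.single (m + n) (a * b * sc d Q γ m n)

/-- A Lie algebra automorphism of g(γ,Q): a linear equivalence preserving the bracket. -/
def IsAut (d : ℕ) (Q : Matrix (Fin d) (Fin d) ℂ) (γ : Fin d → ℂ)
    (θ : g d ≃ₗ[ℂ] g d) : Prop :=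
  ∀ x y : g d, θ (br d Q γ x y) = br d Q γ (θ x) (θ y)

/-- A derivation of g(γ,Q). -/
def IsDer (d : ℕ) (Q : Matrix (Fin d) (Fin d) ℂ) (γ : Fin d → ℂ)
    (D : g d →ₗ[ℂ] g d) : Prop :=
  ∀ x y : g d, D (br d Q γ x y) = br d Q γ (D x) y + br d Q γ x (D y)

open Classical in
/-- δ(n,R) = 1 if n ∈ R, 0 otherwise. -/
noncomputable def deltaR (d : ℕ) (Q : Matrix (Fin d) (Fin d) ℂ) (n : Fin d → ℤ) : ℕ :=
  if n ∈ Rset d Q then 1 else 0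

/-- A 2-cocycle on g(γ,Q). -/
def IsCocycle (d : ℕ) (Q : Matrix (Fin d) (Fin d) ℂ) (γ : Fin d → ℂ)
    (α : g d →ₗ[ℂ] g d →ₗ[ℂ] ℂ) : Prop :=
  (∀ x y : g d, α x y = - α y x) ∧
  (∀ x y z : g d,
    α (br d Q γ x y) z + α (br d Q γ z x) y + α (br d Q γ y z) x = 0)

/-- i ↔ j is one of the exceptional index pairs (2l-1,2l) (1-based) of the rational
normal form. Here indices are 0-based. -/
def OffDiagPair (z : ℕ) (i j : ℕ) : Prop :=
  ∃ l : ℕ, l < z ∧ ((i = 2 * l ∧ j = 2 * l + 1) ∨ (i = 2 * l + 1 ∧ j = 2 * l))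

/-- Q is in rational normal form with parameters z and k_1,…,k_d (0-based indexing:
the paper's pair (2i-1,2i) is the Lean pair (2l, 2l+1) with l = i-1). -/
def IsRNF (d : ℕ) (Q : Matrix (Fin d) (Fin d) ℂ) (z : ℕ) (k : Fin d → ℕ) : Prop :=
  0 < z ∧ 2 * z ≤ d ∧
  (∀ i j : Fin d, ¬ OffDiagPair z i.val j.val → Q i j = 1) ∧
  (∀ (l : ℕ) (_ : l < z) (hi : 2 * l < d) (hj : 2 * l + 1 < d),
      IsPrimitiveRoot (Q ⟨2 * l, hi⟩ ⟨2 * l + 1, hj⟩) (k ⟨2 * l, hi⟩) ∧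
      Q ⟨2 * l + 1, hj⟩ ⟨2 * l, hi⟩ = (Q ⟨2 * l, hi⟩ ⟨2 * l + 1, hj⟩)⁻¹ ∧
      k ⟨2 * l + 1, hj⟩ = k ⟨2 * l, hi⟩ ∧
      1 < k ⟨2 * l, hi⟩) ∧
  (∀ (i : ℕ) (_ : i + 1 < 2 * z) (h1 : i < d) (h2 : i + 1 < d),
      k ⟨i + 1, h2⟩ ∣ k ⟨i, h1⟩) ∧
  (∀ i : Fin d, 2 * z ≤ i.val → k i = 1)

/-- The vector k_1 e_1 ∈ ℤ^d. -/
noncomputable def k1e1 (d : ℕ) (k : Fin d → ℕ) (hd : 0 < d) : Fin d → ℤ :=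
  Pi.single ⟨0, hd⟩ (k ⟨0, hd⟩ : ℤ)

/-- A 2-cocycle is normalized if α(L_{m-k₁e₁}, L_{k₁e₁})=0 for m ∈ R, m ≠ 2k₁e₁,
α(L_0, L_{2k₁e₁})=0, α(L_0, L_s)=0 for s ∉ R, and α(L_m,L_n)=0 whenever m+n ≠ 0. -/
def IsNormalized (d : ℕ) (Q : Matrix (Fin d) (Fin d) ℂ) (k : Fin d → ℕ) (hd : 0 < d)
    (α : g d →ₗ[ℂ] g d →ₗ[ℂ] ℂ) : Prop :=
  (∀ m ∈ Rset d Q, m ≠ 2 • k1e1 d k hd →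
      α (L d (m - k1e1 d k hd)) (L d (k1e1 d k hd)) = 0) ∧
  α (L d 0) (L d (2 • k1e1 d k hd)) = 0 ∧
  (∀ s, s ∉ Rset d Q → α (L d 0) (L d s) = 0) ∧
  (∀ m n : Fin d → ℤ, m + n ≠ 0 → α (L d m) (L d n) = 0)

/-- The degree derivation ∂_i, acting by ∂_i(L_m) = m_i L_m. -/
noncomputable def deg (d : ℕ) (i : Fin d) (y : g d) : g d :=
  y.sum fun m a => Finsupp.single m ((m i : ℂ) * a)

open Classical in
/-- The 2-cocycle α₁: α₁(L_m,L_n) = δ_{m+n,0}((m_γ)³-m_γ)/12 for m ∈ R, 0 otherwise,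
where m_γ = (γ|m)/(γ|k₁e₁). -/
noncomputable def alpha1 (d : ℕ) (Q : Matrix (Fin d) (Fin d) ℂ) (γ : Fin d → ℂ)
    (k : Fin d → ℕ) (hd : 0 < d) (x y : g d) : ℂ :=
  x.sum fun m a => y.sum fun n b => a * b *
    (if m ∈ Rset d Q ∧ m + n = 0 then
       ((ip d γ m / ip d γ (k1e1 d k hd)) ^ 3 - ip d γ m / ip d γ (k1e1 d k hd)) / 12
     else 0)

open Classical in
/-- The 2-cocycle α₂: α₂(L_r,L_s) = δ_{r+s,0} σ(r,-r)(γ|r)/(γ|k₁e₁) for r ∉ R,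
0 otherwise. -/
noncomputable def alpha2 (d : ℕ) (Q : Matrix (Fin d) (Fin d) ℂ) (γ : Fin d → ℂ)
    (k : Fin d → ℕ) (hd : 0 < d) (x y : g d) : ℂ :=
  x.sum fun m a => y.sum fun n b => a * b *
    (if m ∉ Rset d Q ∧ m + n = 0 then
       qsigma d Q m (-m) * (ip d γ m / ip d γ (k1e1 d k hd))
     else 0)

end QTorus

open QTorus

/-!
Every bracket of basis vectors is a multiple `sc m n • L (m + n)`, so antisymmetry and the Jacobi
identity of the bilinear extension reduce to `sc m n = -sc n m` and to the vanishing of the cyclic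
sum `sc m n * sc (m + n) p + sc n p * sc (n + p) m + sc p m * sc (p + m) n`.

Since `σ` is a bicharacter, `R` is a subgroup, and `σ r s = σ s r` as soon as `r + s ∈ R`; in
particular the bracket of two elements outside `R` vanishes when their sum lies in `R`. Up to
rotating `m, n, p`, the case is fixed by how many of them lie in `R`, and in each case the cyclic
sum becomes a polynomial identity in the values of `σ` on `m, n, p` and of `(γ|·)`.
-/

namespace Finsupp

variable {A M N : Type*} [AddCommMonoid M] [AddCancelMonoid N]

theorem eq_zero_of_cyclic_of_single {φ : (A →₀ M) → (A →₀ M) → (A →₀ M) → N}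
    (hadd : ∀ x x' y z, φ (x + x') y z = φ x y z + φ x' y z)
    (hcyc : ∀ x y z, φ x y z = φ y z x)
    (hsingle : ∀ m n p a b c, φ (single m a) (single n b) (single p c) = 0) (x y z : A →₀ M) :
    φ x y z = 0 := by
  have ext_left : ∀ y z, (∀ m a, φ (single m a) y z = 0) → ∀ x, φ x y z = 0 := by
    intro y z h x
    induction x using Finsupp.induction_linear with
    | zero => simpa using hadd 0 0 y z
    | add x x' hx hx' => rw [hadd, hx, hx', add_zero]
    | single m a => exact h m a
  refine ext_left y z (fun m a => ?_) x
  rw [hcyc]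
  refine ext_left z _ (fun n b => ?_) y
  rw [hcyc]
  refine ext_left _ _ (fun p c => ?_) z
  exact hsingle p m n c a b

end Finsupp

namespace QTorus

section GradedBracket

variable {A R : Type*} [AddCommMonoid A] [CommRing R]

noncomputable def gradedBracket (c : A → A → R) : (A →₀ R) →ₗ[R] (A →₀ R) →ₗ[R] (A →₀ R) :=
  Finsupp.linearCombination R fun m =>
    Finsupp.linearCombination R fun n => Finsupp.single (m + n) (c m n)

theorem gradedBracket_single (c : A → A → R) (m n : A) (a b : R) :
    gradedBracket c (Finsupp.single m a) (Finsupp.single n b)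
      = Finsupp.single (m + n) (a * b * c m n) := by
  simp only [gradedBracket, Finsupp.linearCombination_single, LinearMap.smul_apply,
    Finsupp.smul_single, smul_eq_mul, mul_assoc, mul_left_comm a]

theorem gradedBracket_skew {c : A → A → R} (hc : ∀ m n, c m n = -c n m) (x y : A →₀ R) :
    gradedBracket c x y = -gradedBracket c y x := by
  have hflip : gradedBracket c + (gradedBracket c).flip = 0 := by
    ext m n : 4
    simp [gradedBracket_single, hc n m, add_comm n m]
  exact eq_neg_of_add_eq_zero_left (LinearMap.congr_fun₂ hflip x y)

theorem gradedBracket_jacobi {c : A → A → R}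
    (hc : ∀ m n p, c m n * c (m + n) p + c n p * c (n + p) m + c p m * c (p + m) n = 0)
    (x y z : A →₀ R) :
    gradedBracket c (gradedBracket c x y) z + gradedBracket c (gradedBracket c y z) x
      + gradedBracket c (gradedBracket c z x) y = 0 := by
  set B := gradedBracket c
  refine Finsupp.eq_zero_of_cyclic_of_single (φ := fun x y z => B (B x y) z + B (B y z) x
    + B (B z x) y) (fun x x' y z => ?_) (fun x y z => ?_) (fun m n p a b e => ?_) x y z
  · simp only [map_add, LinearMap.add_apply]
    abel
  · abel
  · simp only [B, gradedBracket_single]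
    rw [show n + p + m = m + n + p by abel, show p + m + n = m + n + p by abel,
      ← Finsupp.single_add, ← Finsupp.single_add, ← Finsupp.single_zero (m + n + p)]
    congr 1
    linear_combination a * b * e * hc m n p

end GradedBracket

variable {d : ℕ} {Q : Matrix (Fin d) (Fin d) ℂ} {γ : Fin d → ℂ}

theorem qsigma_ne_zero (hQ : ∀ i j, Q i j ≠ 0) (m n : Fin d → ℤ) : qsigma d Q m n ≠ 0 :=
  Finset.prod_ne_zero_iff.mpr fun i _ => Finset.prod_ne_zero_iff.mpr fun j _ => by
    split_ifs
    exacts [zpow_ne_zero _ (hQ j i), one_ne_zero]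

theorem qsigma_add_left (hQ : ∀ i j, Q i j ≠ 0) (m n p : Fin d → ℤ) :
    qsigma d Q (m + n) p = qsigma d Q m p * qsigma d Q n p := by
  simp only [qsigma, ← Finset.prod_mul_distrib]
  refine Finset.prod_congr rfl fun i _ => Finset.prod_congr rfl fun j _ => ?_
  split_ifs
  exacts [by rw [Pi.add_apply, add_mul, zpow_add₀ (hQ j i)], (mul_one 1).symm]

theorem qsigma_add_right (hQ : ∀ i j, Q i j ≠ 0) (m n p : Fin d → ℤ) :
    qsigma d Q m (n + p) = qsigma d Q m n * qsigma d Q m p := by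
  simp only [qsigma, ← Finset.prod_mul_distrib]
  refine Finset.prod_congr rfl fun i _ => Finset.prod_congr rfl fun j _ => ?_
  split_ifs
  exacts [by rw [Pi.add_apply, mul_add, zpow_add₀ (hQ j i)], (mul_one 1).symm]

theorem qsigma_zero_left (m : Fin d → ℤ) : qsigma d Q 0 m = 1 := by
  simp [qsigma]

theorem qsigma_zero_right (m : Fin d → ℤ) : qsigma d Q m 0 = 1 := by
  simp [qsigma]

theorem qsigma_neg_left (hQ : ∀ i j, Q i j ≠ 0) (m n : Fin d → ℤ) :
    qsigma d Q (-m) n = (qsigma d Q m n)⁻¹ :=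
  eq_inv_of_mul_eq_one_left <| by rw [← qsigma_add_left hQ, neg_add_cancel, qsigma_zero_left]

theorem qsigma_neg_right (hQ : ∀ i j, Q i j ≠ 0) (m n : Fin d → ℤ) :
    qsigma d Q m (-n) = (qsigma d Q m n)⁻¹ :=
  eq_inv_of_mul_eq_one_left <| by rw [← qsigma_add_right hQ, neg_add_cancel, qsigma_zero_right]

def radical (hQ : ∀ i j, Q i j ≠ 0) : AddSubgroup (Fin d → ℤ) where
  carrier := Rset d Q
  zero_mem' n := by rw [qsigma_zero_left, qsigma_zero_right]
  add_mem' hm hn p := by rw [qsigma_add_left hQ, qsigma_add_right hQ, hm p, hn p]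
  neg_mem' hm p := by rw [qsigma_neg_left hQ, qsigma_neg_right hQ, hm p]

theorem qsigma_comm_of_add_mem (hQ : ∀ i j, Q i j ≠ 0) {r s : Fin d → ℤ}
    (h : r + s ∈ Rset d Q) : qsigma d Q r s = qsigma d Q s r := by
  have h_r := h r
  rw [qsigma_add_left hQ, qsigma_add_right hQ] at h_r
  exact (mul_left_cancel₀ (qsigma_ne_zero hQ r r) h_r).symm

theorem ip_add (m n : Fin d → ℤ) : ip d γ (m + n) = ip d γ m + ip d γ n := by
  simp [ip, mul_add, Finset.sum_add_distrib]

theorem ip_sub (m n : Fin d → ℤ) : ip d γ (m - n) = ip d γ m - ip d γ n := by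
  simp [ip, mul_sub, Finset.sum_sub_distrib]

theorem sc_of_mem_of_mem {m n : Fin d → ℤ} (hm : m ∈ Rset d Q) (hn : n ∈ Rset d Q) :
    sc d Q γ m n = qsigma d Q m n * ip d γ (n - m) := by
  rw [sc, if_pos hm, if_pos hn]

theorem sc_of_mem_of_notMem {m n : Fin d → ℤ} (hm : m ∈ Rset d Q) (hn : n ∉ Rset d Q) :
    sc d Q γ m n = qsigma d Q m n * ip d γ n := by
  rw [sc, if_pos hm, if_neg hn]

theorem sc_of_notMem_of_mem {m n : Fin d → ℤ} (hm : m ∉ Rset d Q) (hn : n ∈ Rset d Q) :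
    sc d Q γ m n = -(qsigma d Q n m * ip d γ m) := by
  rw [sc, if_neg hm, if_pos hn]

theorem sc_of_notMem_of_notMem {m n : Fin d → ℤ} (hm : m ∉ Rset d Q) (hn : n ∉ Rset d Q) :
    sc d Q γ m n = qsigma d Q m n - qsigma d Q n m := by
  rw [sc, if_neg hm, if_neg hn]

theorem sc_skew (m n : Fin d → ℤ) : sc d Q γ m n = -sc d Q γ n m := by
  by_cases hm : m ∈ Rset d Q <;> by_cases hn : n ∈ Rset d Q
  · rw [sc_of_mem_of_mem hm hn, sc_of_mem_of_mem hn hm, hm n, ip_sub, ip_sub]; ring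
  · rw [sc_of_mem_of_notMem hm hn, sc_of_notMem_of_mem hn hm, neg_neg]
  · rw [sc_of_notMem_of_mem hm hn, sc_of_mem_of_notMem hn hm]
  · rw [sc_of_notMem_of_notMem hm hn, sc_of_notMem_of_notMem hn hm, neg_sub]

/-- When `r + s ∈ R` both sides vanish, so `sc (r + s) _` may be computed as if `r + s ∉ R`. -/
theorem sc_mul_eq_of_notMem {r s : Fin d → ℤ} (hQ : ∀ i j, Q i j ≠ 0) (hr : r ∉ Rset d Q)
    (hs : s ∉ Rset d Q) {x y : ℂ} (hxy : r + s ∉ Rset d Q → x = y) :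
    sc d Q γ r s * x = (qsigma d Q r s - qsigma d Q s r) * y := by
  rw [sc_of_notMem_of_notMem hr hs]
  by_cases hrs : r + s ∈ Rset d Q
  · rw [qsigma_comm_of_add_mem hQ hrs, sub_self, zero_mul, zero_mul]
  · rw [hxy hrs]

theorem sc_mul_sc_of_notMem (hQ : ∀ i j, Q i j ≠ 0) {r s t : Fin d → ℤ} (hr : r ∉ Rset d Q)
    (hs : s ∉ Rset d Q) (ht : t ∉ Rset d Q) :
    sc d Q γ r s * sc d Q γ (r + s) t = (qsigma d Q r s - qsigma d Q s r)
      * (qsigma d Q r t * qsigma d Q s t - qsigma d Q t r * qsigma d Q t s) :=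
  sc_mul_eq_of_notMem hQ hr hs fun hrs => by
    rw [sc_of_notMem_of_notMem hrs ht, qsigma_add_left hQ, qsigma_add_right hQ]

noncomputable def jacobiSum (d : ℕ) (Q : Matrix (Fin d) (Fin d) ℂ) (γ : Fin d → ℂ)
    (m n p : Fin d → ℤ) : ℂ :=
  sc d Q γ m n * sc d Q γ (m + n) p + sc d Q γ n p * sc d Q γ (n + p) m
    + sc d Q γ p m * sc d Q γ (p + m) n

theorem jacobiSum_rotate (m n p : Fin d → ℤ) : jacobiSum d Q γ m n p = jacobiSum d Q γ n p m := by
  unfold jacobiSum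
  ring

theorem jacobiSum_of_mem_of_mem_of_mem (hQ : ∀ i j, Q i j ≠ 0) {m n p : Fin d → ℤ}
    (hm : m ∈ Rset d Q) (hn : n ∈ Rset d Q) (hp : p ∈ Rset d Q) : jacobiSum d Q γ m n p = 0 := by
  rw [jacobiSum, sc_of_mem_of_mem hm hn, sc_of_mem_of_mem ((radical hQ).add_mem hm hn) hp,
    sc_of_mem_of_mem hn hp, sc_of_mem_of_mem ((radical hQ).add_mem hn hp) hm,
    sc_of_mem_of_mem hp hm, sc_of_mem_of_mem ((radical hQ).add_mem hp hm) hn,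
    qsigma_add_left hQ, qsigma_add_left hQ, qsigma_add_left hQ, hn m, hp m, hp n]
  simp only [ip_sub, ip_add]
  ring

theorem jacobiSum_of_mem_of_mem_of_notMem (hQ : ∀ i j, Q i j ≠ 0) {m n p : Fin d → ℤ}
    (hm : m ∈ Rset d Q) (hn : n ∈ Rset d Q) (hp : p ∉ Rset d Q) : jacobiSum d Q γ m n p = 0 := by
  have hnp : n + p ∉ Rset d Q := ((radical hQ).add_mem_cancel_left hn).not.mpr hp
  have hpm : p + m ∉ Rset d Q := ((radical hQ).add_mem_cancel_right hm).not.mpr hp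
  rw [jacobiSum, sc_of_mem_of_mem hm hn, sc_of_mem_of_notMem ((radical hQ).add_mem hm hn) hp,
    sc_of_mem_of_notMem hn hp, sc_of_notMem_of_mem hnp hm, sc_of_notMem_of_mem hp hm,
    sc_of_notMem_of_mem hpm hn, qsigma_add_left hQ, qsigma_add_right hQ,
    qsigma_add_right hQ, hn m]
  simp only [ip_sub, ip_add]
  ring

theorem jacobiSum_of_mem_of_notMem_of_notMem (hQ : ∀ i j, Q i j ≠ 0) {m n p : Fin d → ℤ}
    (hm : m ∈ Rset d Q) (hn : n ∉ Rset d Q) (hp : p ∉ Rset d Q) : jacobiSum d Q γ m n p = 0 := by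
  have hmn : m + n ∉ Rset d Q := ((radical hQ).add_mem_cancel_left hm).not.mpr hn
  have hpm : p + m ∉ Rset d Q := ((radical hQ).add_mem_cancel_right hm).not.mpr hp
  have hmid : sc d Q γ n p * sc d Q γ (n + p) m = (qsigma d Q n p - qsigma d Q p n)
      * -(qsigma d Q m n * qsigma d Q m p * ip d γ (n + p)) :=
    sc_mul_eq_of_notMem hQ hn hp fun hnp => by
      rw [sc_of_notMem_of_mem hnp hm, qsigma_add_right hQ]
  rw [jacobiSum, sc_of_mem_of_notMem hm hn, sc_of_notMem_of_notMem hmn hp, hmid,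
    sc_of_notMem_of_mem hp hm, sc_of_notMem_of_notMem hpm hn, qsigma_add_left hQ,
    qsigma_add_right hQ, qsigma_add_left hQ, qsigma_add_right hQ, ← hm p, ← hm n, ip_add]
  ring

theorem jacobiSum_of_notMem_of_notMem_of_notMem (hQ : ∀ i j, Q i j ≠ 0) {m n p : Fin d → ℤ}
    (hm : m ∉ Rset d Q) (hn : n ∉ Rset d Q) (hp : p ∉ Rset d Q) : jacobiSum d Q γ m n p = 0 := by
  rw [jacobiSum, sc_mul_sc_of_notMem hQ hm hn hp, sc_mul_sc_of_notMem hQ hn hp hm,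
    sc_mul_sc_of_notMem hQ hp hm hn]
  ring

theorem jacobiSum_eq_zero (hQ : ∀ i j, Q i j ≠ 0) (m n p : Fin d → ℤ) :
    jacobiSum d Q γ m n p = 0 := by
  by_cases hm : m ∈ Rset d Q <;> by_cases hn : n ∈ Rset d Q <;> by_cases hp : p ∈ Rset d Q
  · exact jacobiSum_of_mem_of_mem_of_mem hQ hm hn hp
  · exact jacobiSum_of_mem_of_mem_of_notMem hQ hm hn hp
  · rw [← jacobiSum_rotate]; exact jacobiSum_of_mem_of_mem_of_notMem hQ hp hm hn
  · exact jacobiSum_of_mem_of_notMem_of_notMem hQ hm hn hp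
  · rw [jacobiSum_rotate]; exact jacobiSum_of_mem_of_mem_of_notMem hQ hn hp hm
  · rw [jacobiSum_rotate]; exact jacobiSum_of_mem_of_notMem_of_notMem hQ hn hp hm
  · rw [← jacobiSum_rotate]; exact jacobiSum_of_mem_of_notMem_of_notMem hQ hp hm hn
  · exact jacobiSum_of_notMem_of_notMem_of_notMem hQ hm hn hp

theorem gradedBracket_L (m n : Fin d → ℤ) :
    gradedBracket (sc d Q γ) (L d m) (L d n) = sc d Q γ m n • L d (m + n) := by
  rw [L, L, gradedBracket_single, L, Finsupp.smul_single, smul_eq_mul, one_mul, one_mul, mul_one]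

end QTorus

theorem stmt0_general (d : ℕ) (Q : Matrix (Fin d) (Fin d) ℂ) (hQ : QOk d Q)
    (γ : Fin d → ℂ) :
    ∃ B : g d →ₗ[ℂ] g d →ₗ[ℂ] g d,
      (∀ m n : Fin d → ℤ, m ∈ Rset d Q → n ∈ Rset d Q →
        B (L d m) (L d n) = (qsigma d Q m n * ip d γ (n - m)) • L d (m + n)) ∧
      (∀ m s : Fin d → ℤ, m ∈ Rset d Q → s ∉ Rset d Q →
        B (L d m) (L d s) = (qsigma d Q m s * ip d γ s) • L d (m + s)) ∧
      (∀ r s : Fin d → ℤ, r ∉ Rset d Q → s ∉ Rset d Q →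
        B (L d r) (L d s) = (qsigma d Q r s - qsigma d Q s r) • L d (r + s)) ∧
      (∀ x y : g d, B x y = - B y x) ∧
      (∀ x y z : g d, B (B x y) z + B (B y z) x + B (B z x) y = 0) := by
  obtain ⟨-, -, hQ⟩ := hQ
  refine ⟨gradedBracket (sc d Q γ), fun m n hm hn => ?_, fun m s hm hs => ?_,
    fun r s hr hs => ?_, gradedBracket_skew sc_skew, gradedBracket_jacobi (jacobiSum_eq_zero hQ)⟩
  · rw [gradedBracket_L, sc_of_mem_of_mem hm hn]
  · rw [gradedBracket_L, sc_of_mem_of_notMem hm hs]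
  · rw [gradedBracket_L, sc_of_notMem_of_notMem hr hs]

/-- The prescribed bracket on g(γ,Q) is well defined: there is a bilinear
map extending [L_m,L_n]=σ(m,n)(γ|n−m)L_{m+n} (m,n∈R), [L_m,L_s]=σ(m,s)(γ|s)L_{m+s}
(m∈R, s∉R), [L_r,L_s]=(σ(r,s)−σ(s,r))L_{r+s} (r,s∉R) which is antisymmetric and
satisfies the Jacobi identity, so g(γ,Q) is a complex Lie algebra. -/
theorem stmt0 (d : ℕ) (hd : 1 < d) (Q : Matrix (Fin d) (Fin d) ℂ) (hQ : QOk d Q)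
    (γ : Fin d → ℂ) (hγ : Generic d γ) :
    ∃ B : g d →ₗ[ℂ] g d →ₗ[ℂ] g d,
      (∀ m n : Fin d → ℤ, m ∈ Rset d Q → n ∈ Rset d Q →
        B (L d m) (L d n) = (qsigma d Q m n * ip d γ (n - m)) • L d (m + n)) ∧
      (∀ m s : Fin d → ℤ, m ∈ Rset d Q → s ∉ Rset d Q →
        B (L d m) (L d s) = (qsigma d Q m s * ip d γ s) • L d (m + s)) ∧
      (∀ r s : Fin d → ℤ, r ∉ Rset d Q → s ∉ Rset d Q →
        B (L d r) (L d s) = (qsigma d Q r s - qsigma d Q s r) • L d (r + s)) ∧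
      (∀ x y : g d, B x y = - B y x) ∧
      (∀ x y z : g d, B (B x y) z + B (B y z) x + B (B z x) y = 0) :=
  stmt0_general d Q hQ γ
end

section
/- Suppose Q is in rational normal form with parameters z and k_1,…,k_d. Then the set R={m∈ℤ^d : σ(m,n)=σ(n,m) for all n∈ℤ^d} equals the subgroup ⊕_{i=1}^d k_iℤe_i of ℤ^d, i.e., m∈R if and only if k_i divides m_i for every 1≤i≤d. -/
open scoped BigOperators

open QTorus

/-! In rational normal form the only entries of `Q` below the diagonal that differ from `1` are
`q_{2l+1,2l}`, primitive `k_{2l}`-th roots of unity, and `k_{2l+1} = k_{2l}`. So if `k_i ∣ m_i` for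
all `i`, every factor of `σ(m,n)` and of `σ(n,m)` is `1`. Conversely, comparing `σ(m,e_j)` with
`σ(e_j,m)` for `j = 2l` and `j = 2l+1` leaves exactly `q_{2l+1,2l}^{m_{2l+1}} = 1` and
`q_{2l+1,2l}^{m_{2l}} = 1`, while `k_i = 1` for `i ≥ 2z`. -/

namespace QTorus

variable {d : ℕ} {Q : Matrix (Fin d) (Fin d) ℂ}

theorem mem_Rset_of_zpow_eq_one {m : Fin d → ℤ}
    (h : ∀ i j : Fin d, i < j → Q j i ^ m i = 1 ∧ Q j i ^ m j = 1) : m ∈ Rset d Q := by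
  intro n
  refine Finset.prod_congr rfl fun i _ => Finset.prod_congr rfl fun j _ => ?_
  split_ifs with hij
  · obtain ⟨hi, hj⟩ := h i j hij
    rw [zpow_mul, hj, one_zpow, mul_comm, zpow_mul, hi, one_zpow]
  · rfl

theorem qsigma_single_right (m : Fin d → ℤ) {j₀ : Fin d} (j₁ : Fin d)
    (hQ : ∀ j, j₀ < j → j ≠ j₁ → Q j j₀ = 1) :
    qsigma d Q m (Pi.single j₀ 1) = if j₀ < j₁ then Q j₁ j₀ ^ m j₁ else 1 := by
  unfold qsigma
  rw [Finset.prod_eq_single j₀ (fun i _ hi => Finset.prod_eq_one fun j _ => by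
    simp [Pi.single_eq_of_ne hi]) (by simp)]
  rw [Finset.prod_eq_single j₁ (fun j _ hj => by by_cases h : j₀ < j <;> simp [h, hQ j, hj])
    (by simp)]
  simp

theorem qsigma_single_left (m : Fin d → ℤ) {j₀ : Fin d} (i₁ : Fin d)
    (hQ : ∀ i, i < j₀ → i ≠ i₁ → Q j₀ i = 1) :
    qsigma d Q (Pi.single j₀ 1) m = if i₁ < j₀ then Q j₀ i₁ ^ m i₁ else 1 := by
  unfold qsigma
  have hcol (i : Fin d) : (∏ j, if i < j then Q j i ^ ((Pi.single j₀ 1 : Fin d → ℤ) j * m i)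
      else 1) = if i < j₀ then Q j₀ i ^ m i else 1 :=
    (Finset.prod_eq_single j₀ (fun j _ hj => by simp [Pi.single_eq_of_ne hj]) (by simp)).trans
      (by simp)
  rw [Finset.prod_congr rfl fun i _ => hcol i,
    Finset.prod_eq_single i₁ (fun i _ hi => by by_cases h : i < j₀ <;> simp [h, hQ i, hi]) (by simp)]

variable {z : ℕ} {k : Fin d → ℕ}

theorem IsRNF.apply_eq_one_of_lt (h : IsRNF d Q z k) {i j : Fin d} (hij : i < j)
    (hpair : ¬ ∃ l < z, i.val = 2 * l ∧ j.val = 2 * l + 1) : Q j i = 1 :=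
  h.2.2.1 j i fun ⟨l, hl, hji⟩ => by
    rw [Fin.lt_def] at hij
    exact hpair ⟨l, hl, by omega⟩

theorem IsRNF.isPrimitiveRoot (h : IsRNF d Q z k) {l : ℕ} (hl : l < z) (ha : 2 * l < d)
    (hb : 2 * l + 1 < d) : IsPrimitiveRoot (Q ⟨2 * l + 1, hb⟩ ⟨2 * l, ha⟩) (k ⟨2 * l, ha⟩) := by
  obtain ⟨hprim, hinv, -⟩ := h.2.2.2.1 l hl ha hb
  exact hinv ▸ hprim.inv

theorem IsRNF.k_succ_eq (h : IsRNF d Q z k) {l : ℕ} (hl : l < z) (ha : 2 * l < d)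
    (hb : 2 * l + 1 < d) : k ⟨2 * l + 1, hb⟩ = k ⟨2 * l, ha⟩ :=
  (h.2.2.2.1 l hl ha hb).2.2.1

theorem IsRNF.eq_one_or_isPrimitiveRoot (h : IsRNF d Q z k) {i j : Fin d} (hij : i < j) :
    Q j i = 1 ∨ IsPrimitiveRoot (Q j i) (k i) ∧ k j = k i := by
  by_cases hpair : ∃ l < z, i.val = 2 * l ∧ j.val = 2 * l + 1
  · obtain ⟨l, hl, hi, hj⟩ := hpair
    have ha : 2 * l < d := by omega
    have hb : 2 * l + 1 < d := hj ▸ j.isLt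
    obtain rfl : i = ⟨2 * l, ha⟩ := Fin.ext hi
    obtain rfl : j = ⟨2 * l + 1, hb⟩ := Fin.ext hj
    exact Or.inr ⟨h.isPrimitiveRoot hl _ _, h.k_succ_eq hl _ _⟩
  · exact Or.inl (h.apply_eq_one_of_lt hij hpair)

theorem IsRNF.mem_Rset_of_dvd (h : IsRNF d Q z k) {m : Fin d → ℤ}
    (hm : ∀ i, (k i : ℤ) ∣ m i) : m ∈ Rset d Q := by
  refine mem_Rset_of_zpow_eq_one fun i j hij => ?_
  rcases h.eq_one_or_isPrimitiveRoot hij with hQ | ⟨hprim, hk⟩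
  · simp [hQ]
  · exact ⟨(hprim.zpow_eq_one_iff_dvd _).mpr (hm i),
      (hprim.zpow_eq_one_iff_dvd _).mpr (hk ▸ hm j)⟩

theorem IsRNF.zpow_eq_one_of_mem_Rset (h : IsRNF d Q z k) {m : Fin d → ℤ} (hm : m ∈ Rset d Q)
    {l : ℕ} (ha : 2 * l < d) (hb : 2 * l + 1 < d) :
    Q ⟨2 * l + 1, hb⟩ ⟨2 * l, ha⟩ ^ m ⟨2 * l, ha⟩ = 1 ∧
      Q ⟨2 * l + 1, hb⟩ ⟨2 * l, ha⟩ ^ m ⟨2 * l + 1, hb⟩ = 1 := by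
  set a : Fin d := ⟨2 * l, ha⟩
  set b : Fin d := ⟨2 * l + 1, hb⟩
  have hab : a < b := Fin.mk_lt_mk.mpr (by omega)
  have hsa := hm (Pi.single a 1)
  have hsb := hm (Pi.single b 1)
  rw [qsigma_single_right m b, qsigma_single_left m a, if_pos hab, if_neg (lt_irrefl a)] at hsa
  rw [qsigma_single_right m b, qsigma_single_left m a, if_neg (lt_irrefl b), if_pos hab] at hsb
  · exact ⟨hsb.symm, hsa⟩
  all_goals
    intro j hlt hne
    refine h.apply_eq_one_of_lt hlt ?_
    rintro ⟨l', -, h₁, h₂⟩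
    exact hne (Fin.ext (by simp only [a, b] at h₁ h₂ ⊢; omega))

theorem IsRNF.dvd_of_mem_Rset (h : IsRNF d Q z k) {m : Fin d → ℤ} (hm : m ∈ Rset d Q)
    (i : Fin d) : (k i : ℤ) ∣ m i := by
  by_cases hi : 2 * z ≤ i.val
  · simp [h.2.2.2.2.2 i hi]
  have hzd : 2 * z ≤ d := h.2.1
  obtain ⟨l, hl | hl⟩ := Nat.even_or_odd' i.val
  all_goals
    have hlz : l < z := by omega
    have ha : 2 * l < d := by omega
    have hb : 2 * l + 1 < d := by omega
    have hprim := h.isPrimitiveRoot hlz ha hb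
    obtain ⟨hma, hmb⟩ := h.zpow_eq_one_of_mem_Rset hm ha hb
  · obtain rfl : i = ⟨2 * l, ha⟩ := Fin.ext hl
    exact (hprim.zpow_eq_one_iff_dvd _).mp hma
  · obtain rfl : i = ⟨2 * l + 1, hb⟩ := Fin.ext hl
    exact h.k_succ_eq hlz ha hb ▸ (hprim.zpow_eq_one_iff_dvd _).mp hmb

end QTorus

theorem stmt11_general (d : ℕ) (Q : Matrix (Fin d) (Fin d) ℂ)
    (z : ℕ) (k : Fin d → ℕ) (hRNF : IsRNF d Q z k) :
    ∀ m : Fin d → ℤ, m ∈ Rset d Q ↔ ∀ i : Fin d, (k i : ℤ) ∣ m i :=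
  fun _ => ⟨hRNF.dvd_of_mem_Rset, hRNF.mem_Rset_of_dvd⟩

/-- if Q is in rational normal form with parameters z and k_1,…,k_d,
then R = ⊕ k_iℤe_i, i.e. m ∈ R iff k_i ∣ m_i for all i. -/
theorem stmt11 (d : ℕ) (hd : 1 < d) (Q : Matrix (Fin d) (Fin d) ℂ) (hQ : QOk d Q)
    (z : ℕ) (k : Fin d → ℕ) (hRNF : IsRNF d Q z k) :
    ∀ m : Fin d → ℤ, m ∈ Rset d Q ↔ ∀ i : Fin d, (k i : ℤ) ∣ m i :=
  stmt11_general d Q z k hRNF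
end
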